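/- Let M be a real symmetric positive semidefinite N×N matrix, S ⊆ {1,…,N} with complement Sᶜ, and Q the block-diagonal part of M with respect to (S, Sᶜ), assumed positive definite. Let r = rank(M_{SSᶜ}). Then the generalized eigenvalues of (M, Q), counted with multiplicity, contain exactly r values strictly less than 1, exactly r values strictly greater than 1, and exactly N − 2r values equal to 1. In particular, if M_{SSᶜ} has full row rank r = |S| ≤ |Sᶜ|, then the low-frequency subspace span{u_k : λ_k < 1} and the high-frequency subspace span{u_k : λ_k > 1} each have dimension |S|, and the middle subspace span{u_k : λ_k = 1} has dimension |Sᶜ| − |S|. -/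

import Mathlib

/-!
Write `Q = blockDiagPart S M`. For a `Q`-orthonormal generalized eigenbasis `U` we have
`Uᵀ (M - Q) U = diag (λ - 1)`, so the number of eigenvalues different from `1` is `rank (M - Q)`.
In the block form for `(S, Sᶜ)` the matrix `M - Q` has zero diagonal blocks and off-diagonal blocks
`M_{SSᶜ}` and its transpose, so this rank is `2r`. Conjugation by the sign matrix
`J = sideSign S = diag (±1)` of the partition fixes `Q` and sends `M` to `2Q - M`, so `J U` is a
`Q`-orthonormal eigenbasis with eigenvalues `2 - λ`. Both diagonalisations are similar to `Q⁻¹ M`,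
hence the spectrum is symmetric about `1` and the `2r` eigenvalues different from `1` split evenly.
Since the columns of `U` are linearly independent, the dimensions of the three subspaces are these
counts.
-/

open Matrix

theorem Submodule.finrank_prod {K V W : Type*} [DivisionRing K] [AddCommGroup V] [Module K V]
    [AddCommGroup W] [Module K W] (p : Submodule K V) (q : Submodule K W)
    [FiniteDimensional K p] [FiniteDimensional K q] :
    Module.finrank K (p.prod q) = Module.finrank K p + Module.finrank K q := by
  let e : p.prod q ≃ₗ[K] p × q :=
    { toFun := fun x => (⟨x.1.1, x.2.1⟩, ⟨x.1.2, x.2.2⟩)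
      invFun := fun y => ⟨(y.1, y.2), y.1.2, y.2.2⟩
      map_add' := fun _ _ => rfl
      map_smul' := fun _ _ => rfl
      left_inv := fun _ => rfl
      right_inv := fun _ => rfl }
  rw [e.finrank_eq, Module.finrank_prod]

theorem Finset.card_filter_lt_add_card_filter_gt {ι α : Type*} [Fintype ι] [LinearOrder α]
    (f : ι → α) (a : α) :
    (univ.filter fun k => f k < a).card + (univ.filter fun k => a < f k).card =
      (univ.filter fun k => f k ≠ a).card := by
  classical
  rw [← card_union_of_disjoint, ← filter_or]
  · simp_rw [lt_or_lt_iff_ne]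
  · exact disjoint_filter.mpr fun _ _ h => lt_asymm h

theorem Finset.card_filter_lt_one_eq_card_filter_one_lt {ι K : Type*} [Fintype ι] [Ring K]
    [LinearOrder K] [IsStrictOrderedRing K] {f : ι → K}
    (h : univ.val.map f = univ.val.map fun k => 2 - f k) :
    (univ.filter fun k => f k < 1).card = (univ.filter fun k => 1 < f k).card := by
  have hcount := congrArg (Multiset.countP (· < 1)) h
  have two_sub_lt_one (x : K) : 2 - x < 1 ↔ 1 < x := by
    rw [sub_lt_comm]
    norm_num
  simp only [Multiset.countP_map, two_sub_lt_one] at hcount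
  exact hcount

namespace Matrix

variable {ι m n m' n' R K : Type*}

section BlockRank

variable [Field K] [Fintype n] [Fintype n']

theorem rank_fromBlocks_zero_zero (A : Matrix m n K) (D : Matrix m' n' K) :
    (fromBlocks A 0 0 D).rank = A.rank + D.rank := by
  let e := LinearEquiv.sumArrowLequivProdArrow n n' K K
  let e' := LinearEquiv.sumArrowLequivProdArrow m m' K K
  have hlin : (fromBlocks A 0 0 D).mulVecLin =
      e'.symm.toLinearMap ∘ₗ A.mulVecLin.prodMap D.mulVecLin ∘ₗ e.toLinearMap := by
    ext v i
    rcases i with i | i <;> simp [e, e', fromBlocks_mulVec] <;> rfl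
  rw [rank, hlin, LinearMap.range_comp, LinearMap.range_comp,
    LinearMap.range_eq_top.mpr e.surjective, Submodule.map_top, LinearMap.range_prodMap,
    LinearEquiv.finrank_map_eq, Submodule.finrank_prod]
  rfl

theorem rank_fromBlocks_zero₁₁_zero₂₂ (B : Matrix m n' K) (C : Matrix m' n K) :
    (fromBlocks 0 B C 0).rank = B.rank + C.rank := by
  rw [← rank_fromBlocks_zero_zero,
    ← rank_submatrix (fromBlocks 0 B C 0) (Equiv.refl _) (Equiv.sumComm n' n)]
  congr 1
  ext (i | i) (j | j) <;> rfl

end BlockRank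

section Congruence

variable [Fintype ι] [DecidableEq ι]

theorem charpoly_transpose_mul_mul_of_transpose_mul_mul_eq_one [CommRing R]
    {Q U : Matrix ι ι R} (hUQU : Uᵀ * Q * U = 1) (M : Matrix ι ι R) :
    (Uᵀ * M * U).charpoly = (Q⁻¹ * M).charpoly := by
  have hUinv : U⁻¹ = Uᵀ * Q := inv_eq_left_inv hUQU
  have hQinv : Q⁻¹ = U * Uᵀ := by
    refine inv_eq_left_inv ?_
    rw [Matrix.mul_assoc, mul_eq_one_comm, hUQU]
  have hU : IsUnit U := (isUnit_iff_isUnit_det U).mpr (isUnit_det_of_left_inverse hUQU)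
  calc (Uᵀ * M * U).charpoly = (U⁻¹ * (Q⁻¹ * M) * U).charpoly := by
        simp only [hUinv, hQinv, ← Matrix.mul_assoc, hUQU, Matrix.one_mul]
    _ = (Q⁻¹ * M).charpoly := by
        simpa using charpoly_units_conj' hU.unit (Q⁻¹ * M)

theorem map_univ_eq_of_charpoly_diagonal_eq [Field K] {d e : ι → K}
    (h : (diagonal d).charpoly = (diagonal e).charpoly) :
    Finset.univ.val.map d = Finset.univ.val.map e := by
  have roots_eq (f : ι → K) : (diagonal f).charpoly.roots = Finset.univ.val.map f := by
    simpa [charpoly_diagonal, Multiset.map_map, Function.comp_def] using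
      Polynomial.roots_multiset_prod_X_sub_C (Finset.univ.val.map f)
  rw [← roots_eq, ← roots_eq, h]

theorem rank_eq_card_of_transpose_mul_mul_eq_diagonal [Field K] [DecidableEq K]
    {A U : Matrix ι ι K} (hU : IsUnit U.det) {d : ι → K} (h : Uᵀ * A * U = diagonal d) :
    A.rank = Fintype.card {i // d i ≠ 0} := by
  rw [← rank_diagonal, ← h, rank_mul_eq_left_of_isUnit_det U _ hU,
    rank_mul_eq_right_of_isUnit_det Uᵀ _ (by rwa [det_transpose])]

theorem finrank_span_cols_of_isUnit_det [Field K] {U : Matrix ι ι K} (hU : IsUnit U.det)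
    (p : ι → Prop) [DecidablePred p] :
    Module.finrank K (Submodule.span K {v | ∃ k, p k ∧ v = fun i => U i k}) =
      (Finset.univ.filter p).card := by
  have hcols : {v | ∃ k, p k ∧ v = fun i => U i k} =
      Set.range (U.col ∘ Subtype.val (p := p)) := by
    ext v
    constructor
    · rintro ⟨k, hk, rfl⟩
      exact ⟨⟨k, hk⟩, rfl⟩
    · rintro ⟨⟨k, hk⟩, rfl⟩
      exact ⟨k, hk, rfl⟩
  have hli := linearIndependent_cols_iff_isUnit.mpr ((isUnit_iff_isUnit_det U).mpr hU)
  rw [hcols, finrank_span_eq_card (hli.comp _ Subtype.val_injective), Fintype.card_subtype]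

end Congruence

variable [DecidableEq ι]

def blockDiagPart [Zero R] (S : Finset ι) (M : Matrix ι ι R) : Matrix ι ι R :=
  of fun i j => if (i ∈ S ∧ j ∈ S) ∨ (i ∉ S ∧ j ∉ S) then M i j else 0

def sideSign [Ring R] (S : Finset ι) : Matrix ι ι R :=
  diagonal fun i => if i ∈ S then 1 else -1

theorem transpose_sideSign [Ring R] (S : Finset ι) :
    (sideSign S : Matrix ι ι R)ᵀ = sideSign S :=
  diagonal_transpose _

variable [Fintype ι]

section Sign

variable [CommRing R] (S : Finset ι)

theorem sideSign_mul_mul_sideSign_apply (A : Matrix ι ι R) (i j : ι) :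
    (sideSign S * A * sideSign S : Matrix ι ι R) i j =
      (if i ∈ S then 1 else -1) * (if j ∈ S then 1 else -1) * A i j := by
  simp only [sideSign, diagonal_mul, mul_diagonal]
  ring

theorem sideSign_mul_blockDiagPart_mul_sideSign (M : Matrix ι ι R) :
    sideSign S * blockDiagPart S M * sideSign S = blockDiagPart S M := by
  ext i j
  rw [sideSign_mul_mul_sideSign_apply]
  by_cases hi : i ∈ S <;> by_cases hj : j ∈ S <;> simp [blockDiagPart, hi, hj]

theorem sideSign_mul_mul_sideSign (M : Matrix ι ι R) :
    sideSign S * M * sideSign S = 2 • blockDiagPart S M - M := by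
  ext i j
  rw [sideSign_mul_mul_sideSign_apply]
  by_cases hi : i ∈ S <;> by_cases hj : j ∈ S <;> simp [blockDiagPart, hi, hj] <;> ring

end Sign

variable [Field K]

theorem rank_sub_blockDiagPart (S : Finset ι) (M : Matrix ι ι K) :
    (M - blockDiagPart S M).rank =
      (M.submatrix (Subtype.val : {i // i ∈ S} → ι) (Subtype.val : {i // i ∉ S} → ι)).rank +
      (M.submatrix (Subtype.val : {i // i ∉ S} → ι) (Subtype.val : {i // i ∈ S} → ι)).rank := by
  let e := Equiv.sumCompl (· ∈ S)
  rw [← rank_fromBlocks_zero₁₁_zero₂₂, ← rank_submatrix (M - blockDiagPart S M) e e]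
  congr 1
  ext (i | i) (j | j) <;> simp [e, blockDiagPart, i.2, j.2]

theorem map_univ_eq_map_two_sub_of_blockDiagPart {S : Finset ι} {M U : Matrix ι ι K}
    {lam : ι → K} (hUQU : Uᵀ * blockDiagPart S M * U = 1) (hUMU : Uᵀ * M * U = diagonal lam) :
    Finset.univ.val.map lam = Finset.univ.val.map fun k => 2 - lam k := by
  set V := sideSign S * U
  have hconj (A : Matrix ι ι K) : Vᵀ * A * V = Uᵀ * (sideSign S * A * sideSign S) * U := by
    simp only [V, transpose_mul, transpose_sideSign, Matrix.mul_assoc]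
  have hVQV : Vᵀ * blockDiagPart S M * V = 1 := by
    rw [hconj, sideSign_mul_blockDiagPart_mul_sideSign, hUQU]
  have hVMV : Vᵀ * M * V = diagonal fun k => 2 - lam k := by
    rw [hconj, sideSign_mul_mul_sideSign, Matrix.mul_sub, Matrix.sub_mul, Matrix.mul_smul,
      Matrix.smul_mul, hUQU, hUMU, two_smul, ← diagonal_one, diagonal_add, diagonal_sub]
    congr 1
    funext k
    norm_num [one_add_one_eq_two]
  apply map_univ_eq_of_charpoly_diagonal_eq
  rw [← hUMU, ← hVMV, charpoly_transpose_mul_mul_of_transpose_mul_mul_eq_one hUQU,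
    charpoly_transpose_mul_mul_of_transpose_mul_mul_eq_one hVQV]

end Matrix

theorem subspace_dimensions_from_cross_rank_general
    {N : ℕ}
    (M : Matrix (Fin N) (Fin N) ℝ) (hM : M.PosSemidef)
    (S : Finset (Fin N))
    (Q : Matrix (Fin N) (Fin N) ℝ)
    (hQ : ∀ i j, Q i j =
      if (i ∈ S ∧ j ∈ S) ∨ (i ∉ S ∧ j ∉ S) then M i j else 0)
    (lam : Fin N → ℝ)
    (U : Matrix (Fin N) (Fin N) ℝ)
    (hUQU : Uᵀ * Q * U = 1)
    (hMU : M * U = Q * U * Matrix.diagonal lam)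
    (r : ℕ)
    (hr : r = (M.submatrix (Subtype.val : {i : Fin N // i ∈ S} → Fin N)
      (Subtype.val : {i : Fin N // i ∉ S} → Fin N)).rank) :
    ((Finset.univ.filter (fun k : Fin N => lam k < 1)).card = r ∧
     (Finset.univ.filter (fun k : Fin N => 1 < lam k)).card = r ∧
     (Finset.univ.filter (fun k : Fin N => lam k = 1)).card = N - 2 * r) ∧
    (r = S.card → S.card ≤ Sᶜ.card →
      Module.finrank ℝ (Submodule.span ℝ
          {v : Fin N → ℝ | ∃ k : Fin N, lam k < 1 ∧ v = fun i => U i k}) = S.card ∧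
      Module.finrank ℝ (Submodule.span ℝ
          {v : Fin N → ℝ | ∃ k : Fin N, 1 < lam k ∧ v = fun i => U i k}) = S.card ∧
      Module.finrank ℝ (Submodule.span ℝ
          {v : Fin N → ℝ | ∃ k : Fin N, lam k = 1 ∧ v = fun i => U i k}) =
        Sᶜ.card - S.card) := by
  obtain rfl : Q = blockDiagPart S M := Matrix.ext hQ
  have hU : IsUnit U.det := isUnit_det_of_left_inverse hUQU
  have hUMU : Uᵀ * M * U = diagonal lam := by
    rw [Matrix.mul_assoc, hMU, ← Matrix.mul_assoc, ← Matrix.mul_assoc, hUQU, Matrix.one_mul]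
  have hcross : (M.submatrix (Subtype.val : {i : Fin N // i ∉ S} → Fin N)
      (Subtype.val : {i : Fin N // i ∈ S} → Fin N)).rank = r := by
    rw [hr, ← rank_transpose, transpose_submatrix, ← conjTranspose_eq_transpose_of_trivial,
      hM.isHermitian.eq]
  have hne : (Finset.univ.filter fun k => lam k ≠ 1).card = 2 * r := by
    have hdiag : Uᵀ * (M - blockDiagPart S M) * U = diagonal fun k => lam k - 1 := by
      rw [Matrix.mul_sub, Matrix.sub_mul, hUMU, hUQU, ← diagonal_one, diagonal_sub]
    have := rank_eq_card_of_transpose_mul_mul_eq_diagonal hU hdiag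
    rw [rank_sub_blockDiagPart, ← hr, hcross, Fintype.card_subtype] at this
    simpa [sub_eq_zero, two_mul] using this.symm
  have hsymm := Finset.card_filter_lt_one_eq_card_filter_one_lt
    (map_univ_eq_map_two_sub_of_blockDiagPart hUQU hUMU)
  have hsplit := Finset.card_filter_lt_add_card_filter_gt lam 1
  have htotal := Finset.card_filter_add_card_filter_not (s := Finset.univ) fun k => lam k = 1
  simp only [← ne_eq, Finset.card_univ, Fintype.card_fin] at htotal
  refine ⟨⟨by omega, by omega, by omega⟩, fun hrS _ => ?_⟩
  have hcompl := Finset.card_add_card_compl S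
  rw [Fintype.card_fin] at hcompl
  simp only [finrank_span_cols_of_isUnit_det hU]
  omega

/-- Let r = rank(M_{SSᶜ}). Among the generalized eigenvalues of (M, Q(S))
(counted with multiplicity, encoded via a Q-orthonormal generalized
eigendecomposition M U = Q U Λ, Uᵀ Q U = I), exactly r are < 1, exactly r are
> 1, and exactly N − 2r are = 1. In particular, if M_{SSᶜ} has full row rank
r = |S| ≤ |Sᶜ|, the low- and high-frequency subspaces each have dimension |S|
and the middle subspace has dimension |Sᶜ| − |S|. -/
theorem subspace_dimensions_from_cross_rank
    {N : ℕ} (hN : 1 ≤ N)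
    (M : Matrix (Fin N) (Fin N) ℝ) (hM : M.PosSemidef)
    (S : Finset (Fin N))
    (Q : Matrix (Fin N) (Fin N) ℝ)
    (hQ : ∀ i j, Q i j =
      if (i ∈ S ∧ j ∈ S) ∨ (i ∉ S ∧ j ∉ S) then M i j else 0)
    (hQpd : Q.PosDef)
    (lam : Fin N → ℝ)
    (U : Matrix (Fin N) (Fin N) ℝ)
    (hUQU : Uᵀ * Q * U = 1)
    (hMU : M * U = Q * U * Matrix.diagonal lam)
    (r : ℕ)
    (hr : r = (M.submatrix (Subtype.val : {i : Fin N // i ∈ S} → Fin N)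
      (Subtype.val : {i : Fin N // i ∉ S} → Fin N)).rank) :
    ((Finset.univ.filter (fun k : Fin N => lam k < 1)).card = r ∧
     (Finset.univ.filter (fun k : Fin N => 1 < lam k)).card = r ∧
     (Finset.univ.filter (fun k : Fin N => lam k = 1)).card = N - 2 * r) ∧
    (r = S.card → S.card ≤ Sᶜ.card →
      Module.finrank ℝ (Submodule.span ℝ
          {v : Fin N → ℝ | ∃ k : Fin N, lam k < 1 ∧ v = fun i => U i k}) = S.card ∧
      Module.finrank ℝ (Submodule.span ℝ
          {v : Fin N → ℝ | ∃ k : Fin N, 1 < lam k ∧ v = fun i => U i k}) = S.card ∧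
      Module.finrank ℝ (Submodule.span ℝ
          {v : Fin N → ℝ | ∃ k : Fin N, lam k = 1 ∧ v = fun i => U i k}) =
        Sᶜ.card - S.card) :=
  subspace_dimensions_from_cross_rank_general M hM S Q hQ lam U hUQU hMU r hr
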